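/- Let β, x₁,…,x_d, b₁, b₂,… be independent indeterminates and work in the ring of formal power series over ℤ in these variables. Let a = (a₁,…,a_d) ∈ ℤ^d with a_i + d - i ≥ 0 for every i. With H := ( Σ_{s≥0} C(i-d, s) β^s G^{(a_i+d-i)}_{a_i+j-i+s} )_{1≤i,j≤d} and M := ( (-1)^{d-i} e_{d-i}^{(j)}(x) )_{1≤i,j≤d}, where e_p^{(j)}(x) is the p-th elementary symmetric polynomial in x₁,…,x_d with x_j omitted and C(n,s) is the generalized binomial coefficient given by (1+x)^n = Σ_{s≥0} C(n,s)x^s, one has det H · det M = det( [x_j|b]^{a_i+d-i} (1+βx_j)^{i-1} )_{1≤i,j≤d}. -/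

import Mathlib

open scoped BigOperators

namespace GrothDet

/-- Index type for the indeterminates: `β`, `x₁,…,x_d`, `b₁,b₂,…`. -/
abbrev Idx (d : ℕ) := Unit ⊕ Fin d ⊕ ℕ

/-- The ambient ring: formal power series over `ℤ` in `β`, the `xᵢ` and the `bⱼ`. -/
abbrev R (d : ℕ) := MvPowerSeries (Idx d) ℤ

noncomputable def β (d : ℕ) : R d := MvPowerSeries.X (Sum.inl ())
noncomputable def x (d : ℕ) (i : Fin d) : R d := MvPowerSeries.X (Sum.inr (Sum.inl i))
noncomputable def b (d : ℕ) (ℓ : ℕ) : R d := MvPowerSeries.X (Sum.inr (Sum.inr ℓ))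

/-- `x ⊕ y := x + y + βxy`. -/
noncomputable def oplus (d : ℕ) (u v : R d) : R d := u + v + β d * u * v

/-- `[y|b]^k := (y ⊕ b₁)⋯(y ⊕ b_k)`. -/
noncomputable def fb (d : ℕ) (y : R d) (k : ℕ) : R d :=
  ∏ ℓ ∈ Finset.range k, oplus d y (b d ℓ)

/-- The multiplicative inverse of `1 + β * x j` (a unit since its constant term is `1`). -/
noncomputable def invOneAdd (d : ℕ) (j : Fin d) : R d :=
  MvPowerSeries.invOfUnit (1 + β d * x d j) 1

/-- `F^{(k)}(u) = ∏ᵢ (1+βxᵢ)/(1-xᵢu) · ∏_{ℓ=1}^k (1+(u+β)b_ℓ)` as a power series in `u`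
over `R d`; here `(1-xᵢu)⁻¹ = ∑_n xᵢⁿ uⁿ`. -/
noncomputable def F (d : ℕ) (k : ℕ) : PowerSeries (R d) :=
  (∏ i : Fin d,
      PowerSeries.C (1 + β d * x d i) * PowerSeries.mk fun n => x d i ^ n) *
    ∏ ℓ ∈ Finset.range k,
      (1 + (PowerSeries.X + PowerSeries.C (β d)) * PowerSeries.C (b d ℓ))

/-- `[u^t] F^{(k)}(u)`, extended by `0` in negative degrees `t`. -/
noncomputable def Fcoeff (d : ℕ) (k : ℕ) (t : ℤ) : R d :=
  if 0 ≤ t then PowerSeries.coeff t.toNat (F d k) else 0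

/-- The sum `∑_{s≥0} f s` of a family of power series such that `β^s ∣ f s`:
it is defined coefficientwise; on the coefficient of a monomial `n` only the
(finitely many) terms with `s ≤ n(β)` contribute, and the value is the limit of the
partial sums in the formal power series topology. -/
noncomputable def seriesSum (d : ℕ) (f : ℕ → R d) : R d :=
  (fun n => ∑ s ∈ Finset.range (n (Sum.inl ()) + 1), MvPowerSeries.coeff n (f s) :
    (Idx d →₀ ℕ) → ℤ)

/-- `G^{(k)}_m = ∑_{s≥0} (-β)^s [u^{m+s}] F^{(k)}(u)`. -/
noncomputable def G (d : ℕ) (k : ℕ) (m : ℤ) : R d :=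
  seriesSum d fun s => (-β d) ^ s * Fcoeff d k (m + s)

/-- The `p`-th elementary symmetric function of the family `f` restricted to `S`. -/
noncomputable def esym (d : ℕ) (S : Finset (Fin d)) (p : ℕ) (f : Fin d → R d) : R d :=
  ∑ t ∈ S.powersetCard p, ∏ i ∈ t, f i

/-- `x_i/(1+βx_i) = -x̄_i`. -/
noncomputable def xbar (d : ℕ) (i : Fin d) : R d := x d i * invOneAdd d i

/-!
Index rows from `1` and put `k = a_i + d - i`, `A = ∏_r (1 + βx_r)`. Since
`Σ_{s+s'=t} C(c,s) C(-1,s') = C(c-1,t)`, the two β-series in an entry of `H` merge into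
`Σ_t C(i-d-1,t) β^t [u^{a_i+p-i+t}] F^{(k)}`. Multiplying by `M` pairs these coefficients with
those of `∏_{r≠j} (1 - x_r u)`, which cancels every geometric factor of `F^{(k)}` but the `j`-th:
the result is `[u^{k+t}] A (1 - x_j u)⁻¹ ∏_ℓ (1 + (u+β) b_ℓ) = A x_j^t [x_j|b]^k`. The remaining
sum over `t` is the binomial series of `(1 + βx_j)^{i-d-1}`, so
`(HM)_{ij} = c_j [x_j|b]^k (1 + βx_j)^{i-1}` with `c_j = A (1 + βx_j)^{-d}`, and `∏_j c_j = 1`.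
-/

variable {d : ℕ}

open Finset

section SeriesSum

open MvPowerSeries

lemma beta_pow_dvd_iff {s : ℕ} {φ : R d} :
    β d ^ s ∣ φ ↔ ∀ n : Idx d →₀ ℕ, n (Sum.inl ()) < s → coeff n φ = 0 :=
  X_pow_dvd_iff

lemma eq_of_forall_beta_pow_dvd_sub {φ ψ : R d} (h : ∀ S, β d ^ S ∣ φ - ψ) : φ = ψ := by
  refine sub_eq_zero.mp (ext fun n => ?_)
  rw [map_zero]
  exact beta_pow_dvd_iff.mp (h (n (Sum.inl ()) + 1)) n (Nat.lt_succ_self _)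

lemma coeff_seriesSum (f : ℕ → R d) (n : Idx d →₀ ℕ) :
    coeff n (seriesSum d f) = ∑ s ∈ range (n (Sum.inl ()) + 1), coeff n (f s) :=
  rfl

variable {f : ℕ → R d}

lemma beta_pow_dvd_seriesSum_sub_sum_range (hf : ∀ s, β d ^ s ∣ f s) (S : ℕ) :
    β d ^ S ∣ seriesSum d f - ∑ s ∈ range S, f s := by
  refine beta_pow_dvd_iff.mpr fun n hn => ?_
  have hle : n (Sum.inl ()) + 1 ≤ S := hn
  have htail : ∑ s ∈ Ico (n (Sum.inl ()) + 1) S, coeff n (f s) = 0 :=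
    sum_eq_zero fun s hs => beta_pow_dvd_iff.mp (hf s) n (by simp only [mem_Ico] at hs; omega)
  rw [map_sub, map_sum, coeff_seriesSum, ← sum_range_add_sum_Ico _ hle, htail, add_zero, sub_self]

lemma mul_seriesSum (c : R d) (hf : ∀ s, β d ^ s ∣ f s) :
    c * seriesSum d f = seriesSum d fun s => c * f s := by
  refine eq_of_forall_beta_pow_dvd_sub fun S => ?_
  have hc := beta_pow_dvd_seriesSum_sub_sum_range (fun s => (hf s).mul_left c) S
  have key : c * seriesSum d f - seriesSum d (fun s => c * f s) =
      c * (seriesSum d f - ∑ s ∈ range S, f s) -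
        (seriesSum d (fun s => c * f s) - ∑ s ∈ range S, c * f s) := by
    rw [mul_sub, mul_sum]; abel
  rw [key]
  exact dvd_sub ((beta_pow_dvd_seriesSum_sub_sum_range hf S).mul_left c) hc

lemma sum_seriesSum {ι : Type*} (T : Finset ι) (g : ι → ℕ → R d) :
    ∑ p ∈ T, seriesSum d (g p) = seriesSum d fun s => ∑ p ∈ T, g p s := by
  ext n
  simp only [coeff_seriesSum, map_sum]
  exact sum_comm

lemma seriesSum_seriesSum {g : ℕ → ℕ → R d} (hg : ∀ s s', β d ^ (s + s') ∣ g s s') :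
    seriesSum d (fun s => seriesSum d (g s)) =
      seriesSum d fun t => ∑ p ∈ antidiagonal t, g p.1 p.2 := by
  ext n
  set N := n (Sum.inl ())
  have hvanish : ∀ s s', N < s + s' → coeff n (g s s') = 0 :=
    fun s s' h => beta_pow_dvd_iff.mp (hg s s') n h
  simp only [coeff_seriesSum, map_sum, Nat.sum_antidiagonal_eq_sum_range_succ_mk]
  rw [sum_range_diag_flip (N + 1) fun s s' => coeff n (g s s')]
  refine sum_congr rfl fun s hs => (sum_subset ?_ fun s' _ hs' => ?_).symm
  · exact range_subset_range.mpr (Nat.sub_le _ _)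
  · simp only [mem_range] at hs hs'
    exact hvanish s s' (by omega)

end SeriesSum

section BinomialSeries

open MvPowerSeries

lemma hasSubst_of_beta_dvd {y : R d} (hy : β d ∣ y) : PowerSeries.HasSubst y := by
  refine PowerSeries.HasSubst.of_constantCoeff_zero ?_
  obtain ⟨z, rfl⟩ := hy
  simp [β]

lemma seriesSum_coeff_smul_pow (φ : PowerSeries ℤ) {y : R d} (hy : β d ∣ y) :
    seriesSum d (fun t => PowerSeries.coeff t φ • y ^ t) = φ.subst y := by
  ext n
  rw [PowerSeries.coeff_subst (hasSubst_of_beta_dvd hy), coeff_seriesSum,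
    finsum_eq_sum_of_support_subset (s := range (n (Sum.inl ()) + 1))]
  · simp only [map_zsmul]
  · intro t ht
    by_contra hlt
    simp only [mem_coe, mem_range, not_lt] at hlt
    exact ht (by
      dsimp only
      rw [beta_pow_dvd_iff.mp (pow_dvd_pow_of_dvd hy t) n (by omega), smul_zero])

lemma seriesSum_choose_smul_pow_mul_one_add_pow {y : R d} (hy : β d ∣ y) {c : ℤ} {e : ℕ}
    (hce : c + e = 0) : seriesSum d (fun t => Ring.choose c t • y ^ t) * (1 + y) ^ e = 1 := by
  have hbin := seriesSum_coeff_smul_pow (PowerSeries.binomialSeries ℤ c) hy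
  simp only [PowerSeries.binomialSeries_coeff, smul_eq_mul, mul_one] at hbin
  have hsubst := hasSubst_of_beta_dvd hy
  have hone_add :
      (1 + y) ^ e = PowerSeries.substAlgHom hsubst (PowerSeries.binomialSeries ℤ (e : ℤ)) := by
    rw [PowerSeries.binomialSeries_nat, map_pow, map_add, map_one, PowerSeries.coe_substAlgHom,
      PowerSeries.subst_X hsubst]
  rw [hbin, hone_add, ← PowerSeries.coe_substAlgHom hsubst, ← map_mul,
    ← PowerSeries.binomialSeries_add, hce, PowerSeries.binomialSeries_zero, map_one]

end BinomialSeries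

section GeneratingFunction

open PowerSeries

variable {A ι : Type*} [CommRing A]

lemma coeff_prod_one_sub_C_mul_X (s : Finset ι) (f : ι → A) (q : ℕ) :
    coeff q (∏ i ∈ s, (1 - C (f i) * X)) =
      (-1) ^ q * ∑ t ∈ s.powersetCard q, ∏ i ∈ t, f i := by
  have hterm : ∀ t : Finset ι,
      ∏ i ∈ t, -(C (f i) * X) = C ((-1) ^ #t * ∏ i ∈ t, f i) * X ^ #t := by
    intro t
    rw [prod_neg, prod_mul_distrib, prod_const, ← map_prod]
    simp only [map_mul, map_pow, map_neg, map_one]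
    ring
  simp_rw [sub_eq_add_neg, prod_one_add, map_sum, hterm, coeff_C_mul_X_pow,
    powersetCard_eq_filter, sum_filter, mul_sum]
  refine sum_congr rfl fun t _ => ?_
  rcases eq_or_ne (#t) q with rfl | hne
  · simp
  · simp [hne, hne.symm]

lemma mk_pow_mul_one_sub_C_mul_X (y : A) : mk (y ^ ·) * (1 - C y * X) = 1 := by
  ext (_ | n)
  · simp [coeff_one]
  · rw [mul_sub, mul_one, ← mul_assoc, map_sub, coeff_succ_mul_X, coeff_mul_C]
    simp [coeff_one, pow_succ]

lemma coeff_mk_pow_mul_prod (y c : A) (b : ℕ → A) (k t : ℕ) :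
    coeff (k + t) (mk (y ^ ·) * ∏ ℓ ∈ range k, (1 + (X + C c) * C (b ℓ))) =
      y ^ t * ∏ ℓ ∈ range k, (y + b ℓ + c * y * b ℓ) := by
  induction k generalizing t with
  | zero => simp
  | succ k ih =>
    set Q := mk (y ^ ·) * ∏ ℓ ∈ range k, (1 + (X + C c) * C (b ℓ))
    have hQ : mk (y ^ ·) * ∏ ℓ ∈ range (k + 1), (1 + (X + C c) * C (b ℓ)) =
        Q + Q * X * C (b k) + Q * C (c * b k) := by
      rw [prod_range_succ, map_mul]; ring
    rw [hQ, map_add, map_add, coeff_mul_C, coeff_mul_C, show k + 1 + t = k + t + 1 by omega,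
      coeff_succ_mul_X, show k + t + 1 = k + (t + 1) by omega, ih, ih, prod_range_succ]
    ring

end GeneratingFunction

section Fcoeff

open PowerSeries

lemma F_mul_prod_one_sub_C_mul_X (j : Fin d) (k : ℕ) :
    F d k * ∏ r ∈ univ \ {j}, (1 - C (x d r) * X) =
      C (∏ r, (1 + β d * x d r)) *
        (mk (x d j ^ ·) * ∏ ℓ ∈ range k, (1 + (X + C (β d)) * C (b d ℓ))) := by
  have hsplit : ∏ r, mk (x d r ^ ·) = mk (x d j ^ ·) * ∏ r ∈ univ \ {j}, mk (x d r ^ ·) :=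
    prod_eq_mul_prod_sdiff_singleton_of_mem (mem_univ j) _
  have hcancel :
      (∏ r ∈ univ \ {j}, mk (x d r ^ ·)) * ∏ r ∈ univ \ {j}, (1 - C (x d r) * X) = 1 := by
    rw [← prod_mul_distrib]
    exact prod_eq_one fun r _ => mk_pow_mul_one_sub_C_mul_X _
  rw [F, prod_mul_distrib, ← map_prod, hsplit]
  linear_combination (C (∏ r, (1 + β d * x d r)) * mk (x d j ^ ·) *
    ∏ ℓ ∈ range k, (1 + (X + C (β d)) * C (b d ℓ))) * hcancel

lemma coeff_F_mul_prod_one_sub_C_mul_X (j : Fin d) (k t : ℕ) :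
    coeff (k + t) (F d k * ∏ r ∈ univ \ {j}, (1 - C (x d r) * X)) =
      (∏ r, (1 + β d * x d r)) * (x d j ^ t * fb d (x d j) k) := by
  rw [F_mul_prod_one_sub_C_mul_X, coeff_C_mul, coeff_mk_pow_mul_prod]
  rfl

lemma sum_range_coeff_mul_Fcoeff (E : PowerSeries (R d)) {D : ℕ}
    (hE : ∀ q, D ≤ q → coeff q E = 0) (k N : ℕ) :
    ∑ q ∈ range D, coeff q E * Fcoeff d k ((N : ℤ) - q) = coeff N (E * F d k) := by
  rw [coeff_mul, Nat.sum_antidiagonal_eq_sum_range_succ_mk]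
  calc ∑ q ∈ range D, coeff q E * Fcoeff d k ((N : ℤ) - q)
      = ∑ q ∈ range (D + N + 1), coeff q E * Fcoeff d k ((N : ℤ) - q) :=
        sum_subset (range_subset_range.mpr (by omega)) fun q _ hq => by
          rw [hE q (not_lt.mp (mem_range.not.mp hq)), zero_mul]
    _ = ∑ q ∈ range (N + 1), coeff q E * Fcoeff d k ((N : ℤ) - q) :=
        (sum_subset (range_subset_range.mpr (by omega)) fun q _ hq => by
          rw [Fcoeff, if_neg (by simp only [mem_range] at hq; omega), mul_zero]).symm
    _ = ∑ q ∈ range (N + 1), coeff q E * coeff (N - q) (F d k) :=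
        sum_congr rfl fun q hq => by
          have hqN : q ≤ N := Nat.lt_succ_iff.mp (mem_range.mp hq)
          rw [Fcoeff, if_pos (by omega), show ((N : ℤ) - q).toNat = N - q by omega]

lemma sum_Fcoeff_mul_esym (j : Fin d) (k t : ℕ) (e : Fin d → ℤ)
    (he : ∀ p : Fin d, e p + d = k + p + 1) :
    ∑ p : Fin d, Fcoeff d k (e p + t) *
        ((-1 : R d) ^ (d - 1 - p) * esym d (univ \ {j}) (d - 1 - p) (x d)) =
      (∏ r, (1 + β d * x d r)) * (x d j ^ t * fb d (x d j) k) := by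
  set E := ∏ r ∈ univ \ {j}, (1 - C (x d r) * X)
  have hE : ∀ q, coeff q E = (-1) ^ q * esym d (univ \ {j}) q (x d) :=
    coeff_prod_one_sub_C_mul_X _ _
  have hE_vanish : ∀ q, d ≤ q → coeff q E = 0 := fun q hq => by
    have hcard : #(univ \ {j}) < q :=
      (card_lt_univ_of_notMem (x := j) (by simp)).trans_le (by simpa using hq)
    rw [hE, esym, powersetCard_eq_empty.mpr hcard, sum_empty, mul_zero]
  -- after reindexing `p ↦ d - 1 - p`, the left side is `[u^{k+t}] (∏_{r≠j} (1 - x_r u)) F`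
  rw [← coeff_F_mul_prod_one_sub_C_mul_X, mul_comm (F d k),
    ← sum_range_coeff_mul_Fcoeff E hE_vanish, ← sum_range_reflect,
    ← Fin.sum_univ_eq_sum_range (fun q => coeff (d - 1 - q) E *
      Fcoeff d k (((k + t : ℕ) : ℤ) - (d - 1 - q : ℕ)))]
  refine sum_congr rfl fun p _ => ?_
  have hindex : ((k + t : ℕ) : ℤ) - (d - 1 - p : ℕ) = e p + t := by
    have := he p
    push_cast [Nat.sub_sub, Nat.cast_sub (show 1 + (p : ℕ) ≤ d by omega)]
    omega
  rw [hE, mul_comm, hindex]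

end Fcoeff

lemma choose_neg_one (k : ℕ) : Ring.choose (-1 : ℤ) k = (-1) ^ k := by
  rw [Ring.choose, show (-1 : ℤ) - k + 1 = -k by ring, Ring.multichoose_neg_self]

lemma choose_sub_one (c : ℤ) (t : ℕ) :
    Ring.choose (c - 1) t = ∑ p ∈ antidiagonal t, Ring.choose c p.1 * (-1) ^ p.2 := by
  rw [sub_eq_add_neg, Ring.add_choose_eq t (Commute.all _ _)]
  simp only [choose_neg_one]

lemma seriesSum_choose_smul_G (c : ℤ) (k : ℕ) (m : ℤ) :
    seriesSum d (fun s => Ring.choose c s • (β d ^ s * G d k (m + s))) =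
      seriesSum d fun t => Ring.choose (c - 1) t • (β d ^ t * Fcoeff d k (m + t)) := by
  have hG : ∀ s, Ring.choose c s • (β d ^ s * G d k (m + s)) = seriesSum d fun s' =>
      (Ring.choose c s * (-1) ^ s') • (β d ^ (s + s') * Fcoeff d k (m + (s + s' : ℕ))) := by
    intro s
    rw [G, zsmul_eq_mul, ← mul_assoc, mul_seriesSum _ fun s' =>
      (pow_dvd_pow_of_dvd (dvd_neg.mpr dvd_rfl) s').mul_right _]
    congr 1; funext s'
    simp only [zsmul_eq_mul]
    push_cast
    rw [← add_assoc]
    ring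
  simp_rw [hG]
  rw [seriesSum_seriesSum fun s s' => dvd_zsmul_of_dvd _ (dvd_mul_right _ _)]
  congr 1; funext t
  rw [choose_sub_one, sum_smul]
  exact sum_congr rfl fun p hp => by rw [mem_antidiagonal.mp hp]

lemma sum_seriesSum_mul_esym (j : Fin d) (k : ℕ) (e : Fin d → ℤ)
    (he : ∀ p : Fin d, e p + d = k + p + 1) (c : ℤ) :
    ∑ p : Fin d, seriesSum d (fun t => Ring.choose c t • (β d ^ t * Fcoeff d k (e p + t))) *
        ((-1 : R d) ^ (d - 1 - p) * esym d (univ \ {j}) (d - 1 - p) (x d)) =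
      (∏ r, (1 + β d * x d r)) * fb d (x d j) k *
        seriesSum d (fun t => Ring.choose c t • (β d * x d j) ^ t) := by
  simp_rw [mul_comm (seriesSum d _),
    mul_seriesSum _ fun t => dvd_zsmul_of_dvd _ (dvd_mul_right _ _)]
  rw [sum_seriesSum,
    mul_seriesSum _ fun t => dvd_zsmul_of_dvd _ (mul_pow (β d) (x d j) t ▸ dvd_mul_right _ _)]
  congr 1; funext t
  calc _ = ((Ring.choose c t : ℤ) : R d) * β d ^ t * ∑ p : Fin d, Fcoeff d k (e p + t) *
          ((-1 : R d) ^ (d - 1 - p) * esym d (univ \ {j}) (d - 1 - p) (x d)) := by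
        rw [mul_sum]
        exact sum_congr rfl fun p _ => by rw [zsmul_eq_mul]; ring
    _ = _ := by rw [sum_Fcoeff_mul_esym j k t e he, zsmul_eq_mul]; ring

lemma pow_sub_eq_pow_mul_pow_of_mul_eq_one {M : Type*} [CommMonoid M] {u v : M} (h : u * v = 1)
    {i n : ℕ} (hi : i ≤ n) : v ^ (n - i) = v ^ n * u ^ i := by
  calc v ^ (n - i) = v ^ (n - i) * (u * v) ^ i := by rw [h, one_pow, mul_one]
    _ = v ^ n * u ^ i := by rw [mul_pow, ← pow_sub_mul_pow v hi, mul_comm (u ^ i), mul_assoc]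

lemma one_add_beta_mul_x_mul_invOneAdd (j : Fin d) : (1 + β d * x d j) * invOneAdd d j = 1 :=
  MvPowerSeries.mul_invOfUnit _ _ (by simp [β, x])

lemma seriesSum_choose_smul_pow_eq_invOneAdd_pow (j : Fin d) {c : ℤ} {e : ℕ} (hce : c + e = 0) :
    seriesSum d (fun t => Ring.choose c t • (β d * x d j) ^ t) = invOneAdd d j ^ e :=
  left_inv_eq_right_inv (seriesSum_choose_smul_pow_mul_one_add_pow (dvd_mul_right _ _) hce)
    (by rw [← mul_pow, one_add_beta_mul_x_mul_invOneAdd, one_pow])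

lemma prod_prod_one_add_beta_mul_x_mul_invOneAdd_pow :
    ∏ j : Fin d, ((∏ r, (1 + β d * x d r)) * invOneAdd d j ^ d) = 1 := by
  rw [prod_mul_distrib, prod_const, card_univ, Fintype.card_fin, prod_pow, ← mul_pow,
    ← prod_mul_distrib, prod_eq_one fun j _ => one_add_beta_mul_x_mul_invOneAdd j, one_pow]

/-- `det H · det M` equals the bi-alternant determinant. -/
theorem detH_mul_detM
    (d : ℕ) (a : Fin d → ℤ) (ha : ∀ i : Fin d, 0 ≤ a i + d - ((i : ℕ) + 1)) :
    Matrix.det (Matrix.of fun i j : Fin d =>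
        seriesSum d fun s =>
          Ring.choose (((i : ℕ) : ℤ) + 1 - d) s •
            (β d ^ s * G d (a i + d - ((i : ℕ) + 1)).toNat (a i + (j : ℕ) - (i : ℕ) + s))) *
      Matrix.det (Matrix.of fun i j : Fin d =>
        (-1 : R d) ^ (d - 1 - (i : ℕ)) *
          esym d (Finset.univ \ {j}) (d - 1 - (i : ℕ)) (x d))
      = Matrix.det (Matrix.of fun i j : Fin d =>
          fb d (x d j) (a i + d - ((i : ℕ) + 1)).toNat * (1 + β d * x d j) ^ (i : ℕ)) := by
  set k : Fin d → ℕ := fun i => (a i + d - ((i : ℕ) + 1)).toNat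
  have hk : ∀ i, (k i : ℤ) = a i + d - ((i : ℕ) + 1) := fun i => Int.toNat_of_nonneg (ha i)
  rw [← Matrix.det_mul]
  calc _ = Matrix.det (Matrix.of fun i j : Fin d =>
          ((∏ r, (1 + β d * x d r)) * invOneAdd d j ^ d) *
            (fb d (x d j) (k i) * (1 + β d * x d j) ^ (i : ℕ))) := by
        congr 1
        refine Matrix.ext fun i j => ?_
        simp only [Matrix.mul_apply, Matrix.of_apply, seriesSum_choose_smul_G]
        refine (sum_seriesSum_mul_esym j (k i) (fun p => a i + p - i)
          (fun p => by have := hk i; omega) _).trans ?_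
        rw [seriesSum_choose_smul_pow_eq_invOneAdd_pow j (e := d - i)
            (by push_cast [i.isLt.le]; ring),
          pow_sub_eq_pow_mul_pow_of_mul_eq_one (one_add_beta_mul_x_mul_invOneAdd j) i.isLt.le]
        ring
    _ = _ := by
        refine (Matrix.det_mul_row _ _).trans ?_
        rw [prod_prod_one_add_beta_mul_x_mul_invOneAdd_pow, one_mul]
        rfl

end GrothDet
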